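/- Let V = ⊕_{n∈ℤ} V_n be a ℤ-graded complex vector space whose truncations V_{≤n} = ⊕_{m≤n} V_m are finite-dimensional for every n ∈ ℤ. Let G be a group acting ℂ-linearly on V preserving each V_n, and suppose V is a semisimple module over the group algebra ℂ[G]. Let S be a set of G-equivariant homogeneous linear endomorphisms of V and let A ⊆ End_ℂ(V) be the unital subalgebra generated by S. Assume: (i) S contains a homogeneous operator h of degree 0 acting on each V_n as multiplication by the scalar n; (ii) for every n ∈ ℤ and every G-equivariant linear endomorphism T of V_{≤n}, there exists a ∈ A whose compression to V_{≤n} equals T. Then for any two non-isomorphic irreducible ℂ[G]-modules W and W′ whose multiplicity spaces Hom_{ℂ[G]}(W, V) and Hom_{ℂ[G]}(W′, V) are both nonzero, these multiplicity spaces are non-isomorphic as A-modules. -/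

import Mathlib

section Aux

variable {V : Type*} [AddCommGroup V] [Module ℂ V] {Vgr : ℤ → Submodule ℂ V}

/-- The projection onto the `m`-th graded piece. -/
noncomputable def gcomp (hgr : DirectSum.IsInternal Vgr) (m : ℤ) : V →ₗ[ℂ] V :=
  (Vgr m).subtype ∘ₗ (DirectSum.component ℂ ℤ (fun n => ↥(Vgr n)) m) ∘ₗ
    (LinearEquiv.ofBijective (DirectSum.coeLinearMap Vgr) hgr).symm.toLinearMap

theorem gcomp_mem (hgr : DirectSum.IsInternal Vgr) (m : ℤ) (v : V) :
    gcomp hgr m v ∈ Vgr m := Submodule.coe_mem _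

theorem gcomp_of_mem_same (hgr : DirectSum.IsInternal Vgr) {m : ℤ} {v : V}
    (hv : v ∈ Vgr m) : gcomp hgr m v = v := by
  simp only [gcomp, LinearMap.comp_apply, LinearEquiv.coe_toLinearMap]
  rw [show (DirectSum.component ℂ ℤ (fun n => ↥(Vgr n)) m)
      ((LinearEquiv.ofBijective (DirectSum.coeLinearMap Vgr) hgr).symm v)
      = (LinearEquiv.ofBijective (DirectSum.coeLinearMap Vgr) hgr).symm v m from rfl]
  rw [hgr.ofBijective_coeLinearMap_of_mem hv]
  rfl

theorem gcomp_of_mem_ne (hgr : DirectSum.IsInternal Vgr) {m k : ℤ} (hmk : m ≠ k) {v : V}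
    (hv : v ∈ Vgr k) : gcomp hgr m v = 0 := by
  simp only [gcomp, LinearMap.comp_apply, LinearEquiv.coe_toLinearMap]
  rw [show (DirectSum.component ℂ ℤ (fun n => ↥(Vgr n)) m)
      ((LinearEquiv.ofBijective (DirectSum.coeLinearMap Vgr) hgr).symm v)
      = (LinearEquiv.ofBijective (DirectSum.coeLinearMap Vgr) hgr).symm v m from rfl]
  have : (LinearEquiv.ofBijective (DirectSum.coeLinearMap Vgr) hgr).symm v
      = (LinearEquiv.ofBijective (DirectSum.coeLinearMap Vgr) hgr).symm
        ((⟨v, hv⟩ : Vgr k) : V) := rfl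
  rw [this, hgr.ofBijective_coeLinearMap_of_ne (Ne.symm hmk)]
  simp

theorem gcomp_eq_zero_forall (hgr : DirectSum.IsInternal Vgr) {v : V}
    (hz : ∀ m, gcomp hgr m v = 0) : v = 0 := by
  have h0 : (LinearEquiv.ofBijective (DirectSum.coeLinearMap Vgr) hgr).symm v = 0 := by
    refine DFinsupp.ext fun m => ?_
    have := hz m
    simp only [gcomp, LinearMap.comp_apply, LinearEquiv.coe_toLinearMap,
      Submodule.coe_subtype] at this
    have h2 : ((((LinearEquiv.ofBijective (DirectSum.coeLinearMap Vgr) hgr).symm v) m : V))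
        = 0 := this
    simpa using Subtype.ext h2
  have := congrArg (LinearEquiv.ofBijective (DirectSum.coeLinearMap Vgr) hgr) h0
  simpa using this

/-- Induction principle for membership in a `biSup`. -/
theorem biSup_ind' {R M : Type*} [Semiring R] [AddCommMonoid M] [Module R M]
    {ι : Type*} (p : ι → Submodule R M) (s : ι → Prop) {P : M → Prop} (h0 : P 0)
    (hadd : ∀ u w, P u → P w → P (u + w))
    (hmem : ∀ i, s i → ∀ v ∈ p i, P v) :
    ∀ v ∈ (⨆ i, ⨆ _ : s i, p i), P v := by
  intro v hv
  refine Submodule.iSup_induction (motive := P) (fun i => ⨆ _ : s i, p i) hv ?_ h0 hadd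
  intro i u hu
  refine Submodule.iSup_induction (motive := P) (fun _ : s i => p i) hu ?_ h0 hadd
  exact fun hi w hw => hmem i hi w hw

end Aux
open Pointwise

/-- Same setting as Statement 3: `V = ⊕_{n ∈ ℤ} V_n` is a ℤ-graded
complex vector space with finite-dimensional truncations `V_{≤n}`, a group `G` acts
ℂ-linearly preserving each `V_n` (encoded as a compatible `MonoidAlgebra ℂ G`-module
structure) with `V` semisimple over `ℂ[G]`, `S` is a set of `G`-equivariant homogeneous
endomorphisms generating the unital subalgebra `A = Algebra.adjoin ℂ S`, `S` contains a
degree-`0` operator acting on `V_n` as multiplication by `n`, and every `G`-equivariant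
endomorphism of `V_{≤n}` is a compression of an element of `A`.  Then for two
non-isomorphic irreducible `ℂ[G]`-modules `W`, `W'` whose multiplicity spaces
`Hom_{ℂ[G]}(W, V)` and `Hom_{ℂ[G]}(W', V)` are nonzero, these multiplicity spaces are
not isomorphic as `A`-modules: there is no ℂ-linear equivalence `Φ` between them
commuting with the `A`-action `a • f = a ∘ f` (an `A`-module isomorphism is necessarily
ℂ-linear since `ℂ ⊆ A`). -/
theorem multiplicity_spaces_of_distinct_irreducibles_not_isomorphic
    {G : Type*} [Group G]
    {V : Type*} [AddCommGroup V] [Module ℂ V]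
    [Module (MonoidAlgebra ℂ G) V] [IsScalarTower ℂ (MonoidAlgebra ℂ G) V]
    [IsSemisimpleModule (MonoidAlgebra ℂ G) V]
    (Vgr : ℤ → Submodule ℂ V) (hgr : DirectSum.IsInternal Vgr)
    (hfin : ∀ n : ℤ, FiniteDimensional ℂ ↥(⨆ m ≤ n, Vgr m))
    (hGinv : ∀ (n : ℤ) (g : G), ∀ v ∈ Vgr n, MonoidAlgebra.of ℂ G g • v ∈ Vgr n)
    (S : Set (Module.End ℂ V))
    (hSequiv : ∀ a ∈ S, ∀ (g : G) (v : V),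
      a (MonoidAlgebra.of ℂ G g • v) = MonoidAlgebra.of ℂ G g • a v)
    (hShomog : ∀ a ∈ S, ∃ d : ℤ, ∀ m : ℤ, ∀ v ∈ Vgr m, a v ∈ Vgr (m + d))
    (hdeg : ∃ h ∈ S, ∀ n : ℤ, ∀ v ∈ Vgr n, h v = (n : ℂ) • v)
    (hcompr : ∀ (n : ℤ) (T : ↥(⨆ m ≤ n, Vgr m) →ₗ[ℂ] ↥(⨆ m ≤ n, Vgr m)),
      (∀ (g : G) (v w : ↥(⨆ m ≤ n, Vgr m)),
        (w : V) = MonoidAlgebra.of ℂ G g • (v : V) →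
        (T w : V) = MonoidAlgebra.of ℂ G g • (T v : V)) →
      ∃ a ∈ Algebra.adjoin ℂ S, ∀ v : ↥(⨆ m ≤ n, Vgr m),
        a (v : V) - (T v : V) ∈ ⨆ m > n, Vgr m)
    {W W' : Type*} [AddCommGroup W] [Module (MonoidAlgebra ℂ G) W]
    [IsSimpleModule (MonoidAlgebra ℂ G) W]
    [AddCommGroup W'] [Module (MonoidAlgebra ℂ G) W']
    [IsSimpleModule (MonoidAlgebra ℂ G) W']
    (hWW' : IsEmpty (W ≃ₗ[MonoidAlgebra ℂ G] W'))
    (hW : ∃ f : W →ₗ[MonoidAlgebra ℂ G] V, f ≠ 0)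
    (hW' : ∃ f' : W' →ₗ[MonoidAlgebra ℂ G] V, f' ≠ 0) :
    ¬ ∃ Φ : (W →ₗ[MonoidAlgebra ℂ G] V) ≃ₗ[ℂ] (W' →ₗ[MonoidAlgebra ℂ G] V),
      ∀ a ∈ Algebra.adjoin ℂ S, ∀ f f' : W →ₗ[MonoidAlgebra ℂ G] V,
        (∀ w : W, f' w = a (f w)) → ∀ w' : W', Φ f' w' = a (Φ f w') := by
  classical
  obtain ⟨h, hhS, hh⟩ := hdeg
  rintro ⟨Φ, hΦ⟩
  obtain ⟨f, hf⟩ := hW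
  set π : ℤ → V →ₗ[ℂ] V := gcomp hgr with hπdef
  have hπmem : ∀ m v, π m v ∈ Vgr m := fun m v => gcomp_mem hgr m v
  have hπsame : ∀ (m : ℤ) (v : V), v ∈ Vgr m → π m v = v := fun m v hv =>
    gcomp_of_mem_same hgr hv
  have hπne : ∀ (m k : ℤ) (v : V), m ≠ k → v ∈ Vgr k → π m v = 0 := fun m k v hmk hv =>
    gcomp_of_mem_ne hgr hmk hv
  have hπzero : ∀ v : V, (∀ m, π m v = 0) → v = 0 := fun v hv => gcomp_eq_zero_forall hgr hv
  have htop : ∀ v : V, v ∈ ⨆ m, Vgr m := by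
    intro v; rw [hgr.submodule_iSup_eq_top]; trivial
  -- equivariance of the projections
  have hπequiv : ∀ (m : ℤ) (g : G) (v : V),
      π m (MonoidAlgebra.of ℂ G g • v) = MonoidAlgebra.of ℂ G g • π m v := by
    intro m g v
    refine Submodule.iSup_induction
      (motive := fun v => π m (MonoidAlgebra.of ℂ G g • v) = MonoidAlgebra.of ℂ G g • π m v)
      Vgr (htop v) ?_ (by simp) ?_
    · intro k u hu
      by_cases hk : m = k
      · subst hk
        rw [hπsame m _ (hGinv m g u hu), hπsame m u hu]
      · rw [hπne m k _ hk (hGinv k g u hu), hπne m k u hk hu, smul_zero]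
    · intro u w hu hw
      rw [smul_add, map_add, hu, hw, map_add, smul_add]
  have hπsmul : ∀ (m : ℤ) (r : MonoidAlgebra ℂ G) (v : V), π m (r • v) = r • π m v := by
    intro m r v
    induction r using MonoidAlgebra.induction_on with
    | of g => exact hπequiv m g v
    | add p q hp hq => rw [add_smul, map_add, hp, hq, add_smul]
    | smul c r hr => rw [smul_assoc, map_smul, hr, smul_assoc]
  -- choose the degree N
  obtain ⟨w₀, hw₀⟩ : ∃ w, f w ≠ 0 := by
    by_contra hcon
    push_neg at hcon
    exact hf (LinearMap.ext fun w => hcon w)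
  obtain ⟨N, hN⟩ : ∃ N, π N (f w₀) ≠ 0 := by
    by_contra hcon
    push_neg at hcon
    exact hw₀ (hπzero _ hcon)
  set πG : V →ₗ[MonoidAlgebra ℂ G] V :=
    { toFun := π N, map_add' := (π N).map_add, map_smul' := fun r v => hπsmul N r v } with hπG
  set x : W →ₗ[MonoidAlgebra ℂ G] V := πG ∘ₗ f with hxdef
  have hx : ∀ w, x w ∈ Vgr N := fun w => hπmem N (f w)
  have hxne : x ≠ 0 := by
    intro h0
    exact hN (by simpa [hxdef, hπG] using congrArg (fun (g : W →ₗ[MonoidAlgebra ℂ G] V) => g w₀) h0)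
  set y : W' →ₗ[MonoidAlgebra ℂ G] V := Φ x with hydef
  have hyne : y ≠ 0 := fun h0 => hxne (Φ.map_eq_zero_iff.mp h0)
  -- y lands in degree N
  have hyh : ∀ w', h (y w') = (N : ℂ) • y w' := by
    intro w'
    have hxh : ∀ w : W, ((N : ℂ) • x) w = h (x w) := by
      intro w
      rw [hh N (x w) (hx w)]; rfl
    have := hΦ h (Algebra.subset_adjoin hhS) x ((N : ℂ) • x) hxh w'
    rw [map_smul] at this
    simpa [hydef] using this.symm
  have hπh : ∀ (m : ℤ) (u : V), π m (h u) = (m : ℂ) • π m u := by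
    intro m u
    refine Submodule.iSup_induction
      (motive := fun u => π m (h u) = (m : ℂ) • π m u) Vgr (htop u) ?_ (by simp) ?_
    · intro k u hu
      rw [hh k u hu, map_smul]
      by_cases hk : m = k
      · subst hk; rw [hπsame m u hu]
      · rw [hπne m k u hk hu, smul_zero, smul_zero]
    · intro a b ha hb
      rw [map_add, map_add, ha, hb, map_add, smul_add]
  have hy : ∀ w', y w' ∈ Vgr N := by
    intro w'
    have hzero : ∀ m, m ≠ N → π m (y w') = 0 := by
      intro m hm
      have h1 : (m : ℂ) • π m (y w') = (N : ℂ) • π m (y w') := by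
        rw [← hπh m (y w'), hyh w', map_smul]
      have h2 : ((m : ℂ) - (N : ℂ)) • π m (y w') = 0 := by
        rw [sub_smul, h1, sub_self]
      rcases smul_eq_zero.mp h2 with h3 | h3
      · exact absurd (by exact_mod_cast sub_eq_zero.mp h3) hm
      · exact h3
    have hall : ∀ m, π m (y w' - π N (y w')) = 0 := by
      intro m
      rw [map_sub]
      by_cases hm : m = N
      · subst hm
        rw [hπsame m _ (hπmem m (y w')), sub_self]
      · rw [hzero m hm, hπne m N _ hm (hπmem N (y w')), sub_zero]
    have := hπzero _ hall
    rw [sub_eq_zero] at this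
    rw [this]
    exact hπmem N (y w')
  -- the truncation as a `ℂ[G]`-submodule
  have hVgrN_le : Vgr N ≤ ⨆ m ≤ N, Vgr m :=
    le_iSup₂ (f := fun (m : ℤ) (_ : m ≤ N) => Vgr m) N le_rfl
  have hUN_of : ∀ (g : G), ∀ v ∈ (⨆ m ≤ N, Vgr m),
      MonoidAlgebra.of ℂ G g • v ∈ (⨆ m ≤ N, Vgr m) := by
    intro g
    refine biSup_ind' Vgr (fun m => m ≤ N) (by simp) ?_ ?_
    · intro u w hu hw; rw [smul_add]; exact add_mem hu hw
    · intro m hm v hv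
      exact (le_iSup₂ (f := fun (m : ℤ) (_ : m ≤ N) => Vgr m) m hm) (hGinv m g v hv)
  have hUNsmul : ∀ (r : MonoidAlgebra ℂ G) (v : V), v ∈ (⨆ m ≤ N, Vgr m) →
      r • v ∈ (⨆ m ≤ N, Vgr m) := by
    intro r v hv
    induction r using MonoidAlgebra.induction_on with
    | of g => exact hUN_of g v hv
    | add p q hp hq => rw [add_smul]; exact add_mem hp hq
    | smul c r hr => rw [smul_assoc]; exact Submodule.smul_mem _ c hr
  set U' : Submodule (MonoidAlgebra ℂ G) V :=
    { carrier := ((⨆ m ≤ N, Vgr m : Submodule ℂ V) : Set V)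
      add_mem' := fun ha hb => add_mem ha hb
      zero_mem' := zero_mem _
      smul_mem' := fun r {v} hv => hUNsmul r v hv } with hU'def
  have hU'mem : ∀ v : V, v ∈ U' ↔ v ∈ (⨆ m ≤ N, Vgr m) := fun v => Iff.rfl
  -- the ranges of `x` and `y` inside the truncation
  set x₀ : W →ₗ[MonoidAlgebra ℂ G] U' :=
    x.codRestrict U' (fun w => (hU'mem _).mpr (hVgrN_le (hx w))) with hx₀def
  set y₀ : W' →ₗ[MonoidAlgebra ℂ G] U' :=
    y.codRestrict U' (fun w' => (hU'mem _).mpr (hVgrN_le (hy w'))) with hy₀def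
  have hxinj : Function.Injective x₀ := by
    rw [← LinearMap.ker_eq_bot]
    rcases eq_bot_or_eq_top (LinearMap.ker x₀) with hb | ht
    · exact hb
    · exfalso
      apply hxne
      ext w
      have hw : w ∈ LinearMap.ker x₀ := ht ▸ Submodule.mem_top
      have : x₀ w = 0 := hw
      have : ((x₀ w : ↥U') : V) = 0 := by rw [this]; rfl
      simpa [hx₀def] using this
  have hyinj : Function.Injective y₀ := by
    rw [← LinearMap.ker_eq_bot]
    rcases eq_bot_or_eq_top (LinearMap.ker y₀) with hb | ht
    · exact hb
    · exfalso
      apply hyne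
      ext w'
      have hw : w' ∈ LinearMap.ker y₀ := ht ▸ Submodule.mem_top
      have : y₀ w' = 0 := hw
      have : ((y₀ w' : ↥U') : V) = 0 := by rw [this]; rfl
      simpa [hy₀def] using this
  set X₀ := LinearMap.range x₀ with hX₀def
  set Y₀ := LinearMap.range y₀ with hY₀def
  have hXsimple : IsSimpleModule (MonoidAlgebra ℂ G) ↥X₀ :=
    IsSimpleModule.congr (LinearEquiv.ofInjective x₀ hxinj).symm
  have hYsimple : IsSimpleModule (MonoidAlgebra ℂ G) ↥Y₀ :=
    IsSimpleModule.congr (LinearEquiv.ofInjective y₀ hyinj).symm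
  have hXatom : IsAtom X₀ := isSimpleModule_iff_isAtom.mp hXsimple
  have hYatom : IsAtom Y₀ := isSimpleModule_iff_isAtom.mp hYsimple
  have hXYne : X₀ ≠ Y₀ := by
    intro e
    exact hWW'.false ((LinearEquiv.ofInjective x₀ hxinj).trans
      ((LinearEquiv.ofEq _ _ e).trans (LinearEquiv.ofInjective y₀ hyinj).symm))
  have hXYdisj : X₀ ⊓ Y₀ = ⊥ := by
    by_contra hne
    have h1 : X₀ ⊓ Y₀ = X₀ := by
      rcases (inf_le_left : X₀ ⊓ Y₀ ≤ X₀).lt_or_eq with hlt | heq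
      · exact absurd (hXatom.2 _ hlt) hne
      · exact heq
    have h2 : X₀ ≤ Y₀ := h1 ▸ inf_le_right
    rcases h2.lt_or_eq with hlt | heq
    · exact hXatom.1 (hYatom.2 _ hlt)
    · exact hXYne heq
  obtain ⟨Cc, hC⟩ := exists_isCompl (X₀ ⊔ Y₀)
  have hcompl : IsCompl X₀ (Y₀ ⊔ Cc) := by
    constructor
    · refine Submodule.disjoint_def.mpr fun v hvX hvQ => ?_
      obtain ⟨aa, haY, c, hcC, hac⟩ := Submodule.mem_sup.mp hvQ
      have hcv : c = v - aa := by rw [← hac]; abel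
      have hcXY : c ∈ X₀ ⊔ Y₀ := by
        rw [hcv]
        exact sub_mem (Submodule.mem_sup_left hvX) (Submodule.mem_sup_right haY)
      have hc0 : c = 0 := (Submodule.disjoint_def.mp hC.disjoint) c hcXY hcC
      have hva : v = aa := by rw [← hac, hc0, add_zero]
      have : v ∈ X₀ ⊓ Y₀ := ⟨hvX, hva ▸ haY⟩
      rw [hXYdisj] at this
      exact this
    · rw [codisjoint_iff, ← sup_assoc, ← codisjoint_iff]
      exact hC.codisjoint
  set T₀ : ↥U' →ₗ[MonoidAlgebra ℂ G] ↥U' :=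
    X₀.subtype ∘ₗ (Submodule.projectionOnto X₀ (Y₀ ⊔ Cc) hcompl) with hT₀def
  have hT₀X : ∀ (u : ↥U') (hu : u ∈ X₀), T₀ u = u := by
    intro u hu
    have h1 := Submodule.linearProjOfIsCompl_apply_left hcompl ⟨u, hu⟩
    show X₀.subtype (Submodule.projectionOnto X₀ (Y₀ ⊔ Cc) hcompl u) = u
    rw [show ((⟨u, hu⟩ : X₀) : ↥U') = u from rfl] at h1
    rw [h1]
    rfl
  have hT₀Y : ∀ (u : ↥U'), u ∈ Y₀ → T₀ u = 0 := by
    intro u hu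
    have h1 := Submodule.projectionOnto_apply_of_mem_right hcompl
      ((le_sup_left : Y₀ ≤ Y₀ ⊔ Cc) hu)
    show X₀.subtype (Submodule.projectionOnto X₀ (Y₀ ⊔ Cc) hcompl u) = 0
    rw [h1]
    rfl
  -- transfer `T₀` to the `ℂ`-submodule truncation
  have hres : U'.restrictScalars ℂ = (⨆ m ≤ N, Vgr m : Submodule ℂ V) :=
    Submodule.ext fun v => Iff.rfl
  set κ : ↥(⨆ m ≤ N, Vgr m : Submodule ℂ V) ≃ₗ[ℂ] ↥U' :=
    (LinearEquiv.ofEq _ _ hres.symm).trans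
      ((Submodule.restrictScalarsEquiv ℂ (MonoidAlgebra ℂ G) V U').restrictScalars ℂ) with hκdef
  have hκcoe : ∀ v : ↥(⨆ m ≤ N, Vgr m : Submodule ℂ V), ((κ v : ↥U') : V) = (v : V) :=
    fun v => rfl
  have hκcoe' : ∀ u : ↥U', ((κ.symm u : ↥(⨆ m ≤ N, Vgr m : Submodule ℂ V)) : V) = (u : V) := by
    intro u
    have h1 := hκcoe (κ.symm u)
    rw [κ.apply_symm_apply] at h1
    exact h1
  set T : ↥(⨆ m ≤ N, Vgr m : Submodule ℂ V) →ₗ[ℂ] ↥(⨆ m ≤ N, Vgr m : Submodule ℂ V) :=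
    κ.symm.toLinearMap ∘ₗ (T₀.restrictScalars ℂ) ∘ₗ κ.toLinearMap with hTdef
  have hTcoe : ∀ v, ((T v : ↥(⨆ m ≤ N, Vgr m : Submodule ℂ V)) : V) = ((T₀ (κ v) : ↥U') : V) := by
    intro v
    rw [hTdef]
    exact hκcoe' _
  have hTe : ∀ (g : G) (v w : ↥(⨆ m ≤ N, Vgr m : Submodule ℂ V)),
      (w : V) = MonoidAlgebra.of ℂ G g • (v : V) →
      (T w : V) = MonoidAlgebra.of ℂ G g • (T v : V) := by
    intro g v w hw
    have hκw : κ w = (MonoidAlgebra.of ℂ G g : MonoidAlgebra ℂ G) • κ v := by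
      apply Subtype.ext
      rw [hκcoe, Submodule.coe_smul, hκcoe]
      exact hw
    rw [hTcoe, hTcoe, hκw, map_smul]
    rfl
  obtain ⟨a, haA, ha⟩ := hcompr N T hTe
  -- values of the compression on the images of `x` and `y`
  have hTx : ∀ w : W, (T ⟨x w, hVgrN_le (hx w)⟩ : V) = x w := by
    intro w
    have hmemX : κ ⟨x w, hVgrN_le (hx w)⟩ ∈ X₀ := by
      have : κ ⟨x w, hVgrN_le (hx w)⟩ = x₀ w := by
        apply Subtype.ext
        rw [hκcoe]
        rfl
      rw [this]
      exact LinearMap.mem_range_self x₀ w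
    rw [hTcoe, hT₀X _ hmemX, hκcoe]
  have hTy : ∀ w' : W', (T ⟨y w', hVgrN_le (hy w')⟩ : V) = 0 := by
    intro w'
    have hmemY : κ ⟨y w', hVgrN_le (hy w')⟩ ∈ Y₀ := by
      have : κ ⟨y w', hVgrN_le (hy w')⟩ = y₀ w' := by
        apply Subtype.ext
        rw [hκcoe]
        rfl
      rw [this]
      exact LinearMap.mem_range_self y₀ w'
    rw [hTcoe, hT₀Y _ hmemY]
    rfl
  -- every element of the adjoin has bounded degrees
  have hD : ∀ (a : Module.End ℂ V), a ∈ Algebra.adjoin ℂ S →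
      ∃ D : Finset ℤ, ∀ m : ℤ, ∀ v ∈ Vgr m, a v ∈ ⨆ d ∈ D, Vgr (m + d) := by
    intro a ha
    induction ha using Algebra.adjoin_induction with
    | mem a haS =>
      obtain ⟨d, hd⟩ := hShomog a haS
      exact ⟨{d}, fun m v hv => Submodule.mem_iSup_of_mem d
        (Submodule.mem_iSup_of_mem (Finset.mem_singleton_self d) (hd m v hv))⟩
    | algebraMap r =>
      refine ⟨{0}, fun m v hv => Submodule.mem_iSup_of_mem 0
        (Submodule.mem_iSup_of_mem (Finset.mem_singleton_self 0) ?_)⟩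
      rw [add_zero, Module.algebraMap_end_apply]
      exact Submodule.smul_mem _ r hv
    | add a b _ _ iha ihb =>
      obtain ⟨D₁, h1⟩ := iha
      obtain ⟨D₂, h2⟩ := ihb
      refine ⟨D₁ ∪ D₂, fun m v hv => ?_⟩
      rw [LinearMap.add_apply]
      have hle1 : (⨆ d ∈ D₁, Vgr (m + d)) ≤ ⨆ d ∈ D₁ ∪ D₂, Vgr (m + d) :=
        biSup_mono (fun d hd => Finset.mem_union_left _ hd)
      have hle2 : (⨆ d ∈ D₂, Vgr (m + d)) ≤ ⨆ d ∈ D₁ ∪ D₂, Vgr (m + d) :=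
        biSup_mono (fun d hd => Finset.mem_union_right _ hd)
      exact add_mem (hle1 (h1 m v hv)) (hle2 (h2 m v hv))
    | mul a b _ _ iha ihb =>
      classical
      obtain ⟨D₁, h1⟩ := iha
      obtain ⟨D₂, h2⟩ := ihb
      refine ⟨D₂ + D₁, fun m v hv => ?_⟩
      rw [Module.End.mul_apply]
      refine biSup_ind' (fun d => Vgr (m + d)) (fun d => d ∈ D₂)
        (P := fun u => a u ∈ ⨆ c ∈ D₂ + D₁, Vgr (m + c))
        (by beta_reduce; rw [map_zero]; exact zero_mem _)
        (fun u w hu hw => by beta_reduce at hu hw ⊢; rw [map_add]; exact add_mem hu hw)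
        ?_ (b v) (h2 m v hv)
      intro d hd u hu
      beta_reduce at hu ⊢
      have h3 := h1 (m + d) u hu
      have h4 : (⨆ e ∈ D₁, Vgr (m + d + e)) ≤ ⨆ c ∈ D₂ + D₁, Vgr (m + c) := by
        refine iSup₂_le fun e he => ?_
        have h5 : d + e ∈ D₂ + D₁ := Finset.add_mem_add hd he
        rw [show m + d + e = m + (d + e) from add_assoc m d e]
        exact le_iSup₂_of_le (d + e) h5 le_rfl
      exact h4 h3
  obtain ⟨D, hDa⟩ := hD a haA
  -- interpolation polynomial
  set E : Finset ℤ := ((insert (0:ℤ) D).image (fun d => N + d)).erase N with hE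
  set p : Polynomial ℂ := ∏ m ∈ E,
    (Polynomial.C (((N : ℤ) : ℂ) - ((m : ℤ) : ℂ))⁻¹ *
      (Polynomial.X - Polynomial.C ((m : ℤ) : ℂ))) with hp
  have hpN : Polynomial.eval ((N : ℤ) : ℂ) p = 1 := by
    rw [hp, Polynomial.eval_prod]
    refine Finset.prod_eq_one fun m hm => ?_
    have hmN : m ≠ N := Finset.ne_of_mem_erase hm
    have hcast : ((N : ℤ) : ℂ) - ((m : ℤ) : ℂ) ≠ 0 := by
      rw [sub_ne_zero]
      exact_mod_cast fun hc => hmN ((by exact_mod_cast hc : N = m)).symm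
    simp only [Polynomial.eval_mul, Polynomial.eval_C, Polynomial.eval_sub, Polynomial.eval_X]
    exact inv_mul_cancel₀ hcast
  have hpm : ∀ m ∈ E, Polynomial.eval ((m : ℤ) : ℂ) p = 0 := by
    intro m hm
    rw [hp, Polynomial.eval_prod]
    refine Finset.prod_eq_zero hm ?_
    simp [Polynomial.eval_mul]
  -- action of polynomials in `h` on graded pieces
  have haeval : ∀ (q : Polynomial ℂ) (m : ℤ) (v : V), v ∈ Vgr m →
      (Polynomial.aeval h q : Module.End ℂ V) v = Polynomial.eval ((m : ℤ) : ℂ) q • v := by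
    intro q m v hv
    have hpow : ∀ n : ℕ, (h ^ n) v = (((m : ℤ) : ℂ) ^ n) • v := by
      intro n
      induction n with
      | zero => simp
      | succ n ih =>
        rw [pow_succ, Module.End.mul_apply, hh m v hv, map_smul, ih, smul_smul, pow_succ,
          mul_comm]
    induction q using Polynomial.induction_on' with
    | add r q hr hq => rw [map_add, LinearMap.add_apply, hr, hq, Polynomial.eval_add, add_smul]
    | monomial n c =>
      rw [Polynomial.aeval_monomial, Polynomial.eval_monomial, Module.End.mul_apply, hpow n,
        Module.algebraMap_end_apply, smul_smul]
  have hhA : h ∈ Algebra.adjoin ℂ S := Algebra.subset_adjoin hhS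
  have hLA : (Polynomial.aeval h p : Module.End ℂ V) ∈ Algebra.adjoin ℂ S :=
    Algebra.adjoin_mono (Set.singleton_subset_iff.mpr hhS)
      (Polynomial.aeval_mem_adjoin_singleton ℂ h)
  set b : Module.End ℂ V := (Polynomial.aeval h p : Module.End ℂ V) * a with hb
  have hbA : b ∈ Algebra.adjoin ℂ S := mul_mem hLA haA
  -- the key computation lemma
  have hLkey : ∀ u ∈ (⨆ d ∈ insert (0:ℤ) D, Vgr (N + d)),
      (Polynomial.aeval h p : Module.End ℂ V) u = π N u := by
    refine biSup_ind' (fun d => Vgr (N + d)) (fun d => d ∈ insert (0:ℤ) D)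
      (P := fun u => (Polynomial.aeval h p : Module.End ℂ V) u = π N u)
      (by beta_reduce; rw [map_zero, map_zero])
      (fun u w hu hw => by beta_reduce at hu hw ⊢; rw [map_add, map_add, hu, hw]) ?_
    intro d hd u hu
    beta_reduce at hu ⊢
    by_cases hdN : N + d = N
    · rw [show (N + d) = N from hdN] at hu
      rw [haeval p N u hu, hpN, one_smul, hπsame N u hu]
    · have hdE : N + d ∈ E := by
        rw [hE]
        exact Finset.mem_erase.mpr ⟨hdN, Finset.mem_image.mpr ⟨d, hd, rfl⟩⟩
      rw [haeval p (N + d) u hu, hpm _ hdE, zero_smul,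
        hπne N (N + d) u (fun hc => hdN hc.symm) hu]
  have hRzero : ∀ u ∈ (⨆ m > N, Vgr m), π N u = 0 := by
    refine biSup_ind' Vgr (fun m => m > N) (P := fun u => π N u = 0) (map_zero _)
      (fun u w hu hw => by beta_reduce at hu hw ⊢; rw [map_add, hu, hw, add_zero]) ?_
    intro m hm u hu
    beta_reduce at hu ⊢
    exact hπne N m u (ne_of_lt hm) hu
  -- `b` fixes the image of `x` and kills the image of `y`
  have hbx : ∀ w : W, b (x w) = x w := by
    intro w
    have h1 := ha ⟨x w, hVgrN_le (hx w)⟩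
    rw [hTx w] at h1
    have hle : (⨆ d ∈ D, Vgr (N + d)) ≤ ⨆ d ∈ insert (0:ℤ) D, Vgr (N + d) :=
      biSup_mono (fun d hd => Finset.mem_insert_of_mem hd)
    have hmem2 : a (x w) ∈ ⨆ d ∈ insert (0:ℤ) D, Vgr (N + d) := hle (hDa N (x w) (hx w))
    have h3 : b (x w) = π N (a (x w)) := by
      rw [hb, Module.End.mul_apply, hLkey _ hmem2]
    have h4 : π N (a (x w) - x w) = 0 := hRzero _ h1
    rw [map_sub, hπsame N (x w) (hx w), sub_eq_zero] at h4
    rw [h3, h4]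
  have hby : ∀ w' : W', b (y w') = 0 := by
    intro w'
    have h1 := ha ⟨y w', hVgrN_le (hy w')⟩
    rw [hTy w', sub_zero] at h1
    have hle : (⨆ d ∈ D, Vgr (N + d)) ≤ ⨆ d ∈ insert (0:ℤ) D, Vgr (N + d) :=
      biSup_mono (fun d hd => Finset.mem_insert_of_mem hd)
    have hmem2 : a (y w') ∈ ⨆ d ∈ insert (0:ℤ) D, Vgr (N + d) := hle (hDa N (y w') (hy w'))
    have h3 : b (y w') = π N (a (y w')) := by
      rw [hb, Module.End.mul_apply, hLkey _ hmem2]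
    rw [h3, hRzero _ h1]
  -- conclusion
  have hfinal := hΦ b hbA x x (fun w => (hbx w).symm)
  apply hyne
  ext w'
  have h1 : y w' = b (y w') := hfinal w'
  rw [hby w'] at h1
  rw [h1]
  rfl
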